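/- Let μ, ν ∈ [0, π], η = ζ = π/2, and ψ = ψ_{0,t} for some t ∈ {0,1}. Then p_{0,0} = 1/4 if and only if μ + ν = π/2 or μ + ν = 3π/2. -/

import Mathlib

noncomputable def tr (k : Fin 2) (α : ℝ) : ℝ := if k = 0 then Real.cos α else Real.sin α

noncomputable def uvec (μ η : ℝ) (k : Fin 2) : EuclideanSpace ℂ (Fin 2) :=
  (WithLp.equiv 2 (Fin 2 → ℂ)).symm
    ![((-1 : ℂ)) ^ (k : ℕ) * Complex.exp (-(η : ℂ) * Complex.I) * (tr k (μ / 2) : ℂ),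
      (tr (k + 1) (μ / 2) : ℂ)]

noncomputable def ket (i : Fin 2) : EuclideanSpace ℂ (Fin 2) := EuclideanSpace.single i 1

noncomputable def tens (u v : EuclideanSpace ℂ (Fin 2)) : EuclideanSpace ℂ (Fin 2 × Fin 2) :=
  (WithLp.equiv 2 (Fin 2 × Fin 2 → ℂ)).symm fun p => u p.1 * v p.2

noncomputable def bell (s t : Fin 2) : EuclideanSpace ℂ (Fin 2 × Fin 2) :=
  ((Real.sqrt 2 : ℂ))⁻¹ • (tens (ket 0) (ket t) + ((-1 : ℂ)) ^ (s : ℕ) • tens (ket 1) (ket (t + 1)))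

/-- the probability p_{k,ℓ} = |⟨u^{(k)} ⊗ u^{(ℓ)} | ψ_{s,t}⟩|² -/
noncomputable def prob (μ η ν ζ : ℝ) (s t k ℓ : Fin 2) : ℝ :=
  ‖(inner ℂ (tens (uvec μ η k) (uvec ν ζ ℓ)) (bell s t) : ℂ)‖ ^ 2

/-! At `η = π/2` the conjugated coordinates of `uvec μ (π/2) 0` are `(i cos (μ/2), sin (μ/2))`, so
the overlap with the Bell state `bell 0 t` is `-cos ((μ+ν)/2) / √2` for `t = 0` and
`i sin ((μ+ν)/2) / √2` for `t = 1`. Hence `p₀₀ = (1 ± cos (μ+ν)) / 4`, which is `1/4` exactly when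
`cos (μ+ν) = 0`, i.e. when `μ + ν ∈ {π/2, 3π/2}` since `μ + ν ∈ [0, 2π]`. -/

open Complex ComplexConjugate

lemma inner_tens (u v a b : EuclideanSpace ℂ (Fin 2)) :
    inner ℂ (tens u v) (tens a b) = inner ℂ u a * inner ℂ v b := by
  simp only [tens, PiLp.inner_apply, Fintype.sum_prod_type, Finset.sum_mul_sum]
  simp [mul_mul_mul_comm]

lemma inner_ket (u : EuclideanSpace ℂ (Fin 2)) (i : Fin 2) :
    inner ℂ u (ket i) = conj (u i) := by
  simp [ket, EuclideanSpace.inner_single_right]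

lemma inner_tens_bell (u v : EuclideanSpace ℂ (Fin 2)) (s t : Fin 2) :
    inner ℂ (tens u v) (bell s t) =
      (Real.sqrt 2 : ℂ)⁻¹ *
        (conj (u 0) * conj (v t) + (-1) ^ (s : ℕ) * (conj (u 1) * conj (v (t + 1)))) := by
  simp only [bell, inner_smul_right, inner_add_right, inner_tens, inner_ket]

lemma conj_uvec_pi_div_two_zero (μ : ℝ) :
    conj (uvec μ (Real.pi / 2) 0 0) = I * Real.cos (μ / 2) ∧
      conj (uvec μ (Real.pi / 2) 0 1) = Real.sin (μ / 2) := by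
  have hexp : exp (-(Real.pi / 2 * I)) = -I := by
    rw [← neg_mul, ← neg_div]; exact exp_neg_pi_div_two_mul_I
  simp [uvec, tr, hexp, ← cos_conj, ← sin_conj, map_ofNat]

lemma prob_pi_div_two_zero (μ ν : ℝ) :
    prob μ (Real.pi / 2) ν (Real.pi / 2) 0 0 0 0 = (1 + Real.cos (μ + ν)) / 4 := by
  obtain ⟨hμ0, hμ1⟩ := conj_uvec_pi_div_two_zero μ
  obtain ⟨hν0, hν1⟩ := conj_uvec_pi_div_two_zero ν
  have amplitude : inner ℂ (tens (uvec μ (Real.pi / 2) 0) (uvec ν (Real.pi / 2) 0)) (bell 0 0) =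
      ((-(Real.cos ((μ + ν) / 2) / Real.sqrt 2) : ℝ) : ℂ) := by
    rw [inner_tens_bell, Fin.val_zero, pow_zero, one_mul, zero_add, hμ0, hμ1, hν0, hν1,
      add_div, Real.cos_add]
    push_cast
    linear_combination (Real.sqrt 2 : ℂ)⁻¹ * cos (μ / 2) * cos (ν / 2) * I_mul_I
  rw [prob, amplitude, norm_real, Real.norm_eq_abs, sq_abs, neg_sq, div_pow,
    Real.sq_sqrt zero_le_two, Real.cos_sq, mul_div_cancel₀ _ two_ne_zero]
  ring

lemma prob_pi_div_two_one (μ ν : ℝ) :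
    prob μ (Real.pi / 2) ν (Real.pi / 2) 0 1 0 0 = (1 - Real.cos (μ + ν)) / 4 := by
  obtain ⟨hμ0, hμ1⟩ := conj_uvec_pi_div_two_zero μ
  obtain ⟨hν0, hν1⟩ := conj_uvec_pi_div_two_zero ν
  have amplitude : inner ℂ (tens (uvec μ (Real.pi / 2) 0) (uvec ν (Real.pi / 2) 0)) (bell 0 1) =
      ((Real.sin ((μ + ν) / 2) / Real.sqrt 2 : ℝ) : ℂ) * I := by
    rw [inner_tens_bell, Fin.val_zero, pow_zero, one_mul, show (1 : Fin 2) + 1 = 0 from rfl,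
      hμ0, hμ1, hν0, hν1, add_div, Real.sin_add]
    push_cast
    ring
  rw [prob, amplitude, norm_mul, norm_I, mul_one, norm_real, Real.norm_eq_abs, sq_abs, div_pow,
    Real.sq_sqrt zero_le_two, Real.sin_sq, Real.cos_sq, mul_div_cancel₀ _ two_ne_zero]
  ring

lemma cos_eq_zero_iff_of_mem_Icc {x : ℝ} (hx : x ∈ Set.Icc 0 (2 * Real.pi)) :
    Real.cos x = 0 ↔ x = Real.pi / 2 ∨ x = 3 * Real.pi / 2 := by
  rw [Real.cos_eq_zero_iff]
  constructor
  · rintro ⟨k, rfl⟩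
    have hk : k = 0 ∨ k = 1 := by
      have hlow : (-1 : ℝ) < k := by nlinarith [Real.pi_pos, hx.1]
      have hup : (k : ℝ) < 2 := by nlinarith [Real.pi_pos, hx.2]
      have : -1 < k ∧ k < 2 := ⟨by exact_mod_cast hlow, by exact_mod_cast hup⟩
      omega
    rcases hk with rfl | rfl
    · left; push_cast; ring
    · right; push_cast; ring
  · rintro (rfl | rfl)
    · exact ⟨0, by push_cast; ring⟩
    · exact ⟨1, by push_cast; ring⟩

theorem stmt17 (μ ν : ℝ) (hμ : μ ∈ Set.Icc 0 Real.pi) (hν : ν ∈ Set.Icc 0 Real.pi) (t : Fin 2) :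
    prob μ (Real.pi / 2) ν (Real.pi / 2) 0 t 0 0 = 1 / 4 ↔
      μ + ν = Real.pi / 2 ∨ μ + ν = 3 * Real.pi / 2 := by
  have hsum : μ + ν ∈ Set.Icc 0 (2 * Real.pi) :=
    ⟨add_nonneg hμ.1 hν.1, by linarith [hμ.2, hν.2]⟩
  rw [← cos_eq_zero_iff_of_mem_Icc hsum]
  fin_cases t
  · rw [Fin.zero_eta, prob_pi_div_two_zero]
    constructor <;> intro h <;> linarith
  · rw [Fin.mk_one, prob_pi_div_two_one]
    constructor <;> intro h <;> linarith
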